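/- For all v, w ∈ W, the set {xw : x ∈ W, x ≤ v} has a maximum element in the Bruhat order, and this maximum equals the Demazure product v * w. -/

import Mathlib

open scoped Classical

/-- Data of a root system with a fixed choice of simple roots: an ambient
`ℚ`-vector space `V`, a set of roots `Φ` with a distinguished subset `pos` of
positive roots, a coroot functional `coroot β = ⟨·, β^∨⟩` for each root, and
simple roots `α 1, …, α r`. -/
structure RootData where
  r : ℕ
  V : Type
  [grp : AddCommGroup V]
  [mod : Module ℚ V]
  Φ : Set V
  pos : Set V
  coroot : V → Module.Dual ℚ V
  α : Fin r → V

attribute [instance] RootData.grp RootData.mod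

namespace RootData

variable (R : RootData)

/-- The group of linear automorphisms of `V`, in which the Weyl group lives. -/
abbrev Aut : Type := R.V ≃ₗ[ℚ] R.V

/-- The linear map `v ↦ v - ⟨v, β^∨⟩ β`. -/
noncomputable def reflMap (β : R.V) : R.V →ₗ[ℚ] R.V :=
  LinearMap.id - (R.coroot β).smulRight β

/-- The reflection `s_β` associated to a root `β`, as a linear automorphism. -/
noncomputable def s (β : R.V) : R.Aut :=
  if h : (R.reflMap β).comp (R.reflMap β) = LinearMap.id then
    LinearEquiv.ofLinear (R.reflMap β) (R.reflMap β) h h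
  else LinearEquiv.refl ℚ R.V

/-- The simple reflections `s_i := s_{α_i}`. -/
noncomputable def S (i : Fin R.r) : R.Aut := R.s (R.α i)

/-- The Weyl group `W`, generated by the simple reflections. -/
noncomputable def weylGroup : Subgroup R.Aut := Subgroup.closure (Set.range R.S)

/-- The product `s_{i_1} ⋯ s_{i_k}` of a word in the simple reflections. -/
noncomputable def wordProd (l : List (Fin R.r)) : R.Aut := (l.map R.S).prod

/-- The length function on `W`: least length of a word in the simple
reflections expressing the given element. -/
noncomputable def len (w : R.Aut) : ℕ :=
  sInf {n | ∃ l : List (Fin R.r), l.length = n ∧ R.wordProd l = w}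

/-- A word is reduced if its length equals the length of its product. -/
def Reduced (l : List (Fin R.r)) : Prop := R.len (R.wordProd l) = l.length

/-- The Bruhat order on `W`: `u ≤ w` iff some reduced word for `w` has a
subword whose product is `u`. -/
def BruhatLE (u w : R.Aut) : Prop :=
  ∃ l : List (Fin R.r), R.Reduced l ∧ R.wordProd l = w ∧
    ∃ l' : List (Fin R.r), l'.Sublist l ∧ R.wordProd l' = u

/-- Strict Bruhat order. -/
def BruhatLT (u w : R.Aut) : Prop := R.BruhatLE u w ∧ u ≠ w

/-- One step of the Demazure product: `s_i * w := max {w, s_i w}`. -/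
noncomputable def dmulStep (i : Fin R.r) (x : R.Aut) : R.Aut :=
  if R.len x < R.len (R.S i * x) then R.S i * x else x

/-- Demazure product of a word in the simple reflections against `w`:
`s_{i_1} * (s_{i_2} * (⋯ * (s_{i_k} * w)))`. -/
noncomputable def dmulList (l : List (Fin R.r)) (w : R.Aut) : R.Aut :=
  l.foldr R.dmulStep w

/-- The Demazure product `v * w` on the Weyl group, computed by choosing a
reduced word for `v` (it is independent of this choice). -/
noncomputable def dmul (v w : R.Aut) : R.Aut :=
  if h : ∃ l : List (Fin R.r), R.Reduced l ∧ R.wordProd l = v then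
    R.dmulList h.choose w
  else v * w

/-- The parabolic subgroup `W_{P_i}` generated by the simple reflections
`s_j`, `j ≠ i`. -/
noncomputable def WPar (i : Fin R.r) : Subgroup R.Aut :=
  Subgroup.closure (R.S '' {j | j ≠ i})

/-- `W^{P_i}`: the set of minimal-length representatives of cosets of
`W/W_{P_i}`. -/
def minReps (i : Fin R.r) : Set R.Aut :=
  {v | v ∈ R.weylGroup ∧ ∀ p ∈ R.WPar i, R.len v ≤ R.len (v * p)}

/-- `u` is the minimal-length representative of the coset `w W_{P_i}`. -/
def IsMinRep (i : Fin R.r) (u w : R.Aut) : Prop :=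
  u ∈ R.minReps i ∧ u⁻¹ * w ∈ R.WPar i

/-- A weight is dominant if it pairs nonnegatively with every simple coroot. -/
def Dominant (lam : R.V) : Prop := ∀ i : Fin R.r, 0 ≤ R.coroot (R.α i) lam

/-- The dual action of the Weyl group on `V* `: `(u f)(v) = f(u⁻¹ v)`. -/
noncomputable def dualAct (u : R.Aut) (f : Module.Dual ℚ R.V) : Module.Dual ℚ R.V :=
  f.comp (u.symm : R.V →ₗ[ℚ] R.V)

/-- The Demazure polytope `P_λ^w := conv {uλ : u ∈ W, u ≤ w}`. -/
noncomputable def demPolytope (lam : R.V) (w : R.Aut) : Set R.V :=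
  convexHull ℚ {m | ∃ u : R.Aut, u ∈ R.weylGroup ∧ R.BruhatLE u w ∧ m = u lam}

/-- Membership in the weight lattice `X`. -/
def IsWeight (lam : R.V) : Prop := ∀ β ∈ R.Φ, ∃ m : ℤ, R.coroot β lam = (m : ℚ)

/-- The root lattice `Q = ℤΦ`. -/
noncomputable def rootLattice : AddSubgroup R.V := AddSubgroup.closure R.Φ

/-- `w₀` is the longest element of the Weyl group. -/
def IsLongest (w₀ : R.Aut) : Prop :=
  w₀ ∈ R.weylGroup ∧ ∀ g ∈ R.weylGroup, R.len g ≤ R.len w₀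

/-- The positive roots `Φ_{P_i}⁺ = Φ⁺ ∩ span {α_j : j ≠ i}` of the standard
Levi subsystem. -/
def parPos (i : Fin R.r) : Set R.V :=
  {η | η ∈ R.pos ∧ η ∈ Submodule.span ℚ (R.α '' {j | j ≠ i})}

/-- The value `D_i (e^λ)` of the Demazure operator on a basis element of the
group ring `ℤ[X]`. -/
noncomputable def demOnBasis (i : Fin R.r) (lam : R.V) : R.V →₀ ℤ :=
  if 0 ≤ ⌊R.coroot (R.α i) lam⌋ then
    ∑ k ∈ Finset.range (⌊R.coroot (R.α i) lam⌋.toNat + 1),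
      Finsupp.single (lam - (k : ℚ) • R.α i) 1
  else if ⌊R.coroot (R.α i) lam⌋ = -1 then 0
  else - ∑ k ∈ Finset.range ((-⌊R.coroot (R.α i) lam⌋).toNat - 1),
      Finsupp.single (lam + ((k : ℚ) + 1) • R.α i) 1

/-- The Demazure operator `D_i`, as a `ℤ`-linear endomorphism of the group
ring `ℤ[X]` (realized as finitely supported functions `V →₀ ℤ`). -/
noncomputable def demOp (i : Fin R.r) : (R.V →₀ ℤ) →ₗ[ℤ] (R.V →₀ ℤ) :=
  Finsupp.lsum ℤ fun lam => LinearMap.toSpanSingleton ℤ (R.V →₀ ℤ) (R.demOnBasis i lam)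

/-- The Demazure character `D_{i_1} ⋯ D_{i_k} (e^λ)`. -/
noncomputable def demChar (l : List (Fin R.r)) (lam : R.V) : R.V →₀ ℤ :=
  l.foldr (fun i p => R.demOp i p) (Finsupp.single lam 1)

/-- The axioms of a finite crystallographic root system spanning `V`, with
simple roots `α_i` and positive roots `pos`. -/
structure IsRootSystem (R : RootData) : Prop where
  finite : R.Φ.Finite
  span_top : Submodule.span ℚ R.Φ = ⊤
  ne_zero : ∀ β ∈ R.Φ, β ≠ 0
  coroot_self : ∀ β ∈ R.Φ, R.coroot β β = 2
  crystallographic : ∀ β ∈ R.Φ, ∀ γ ∈ R.Φ, ∃ m : ℤ, R.coroot β γ = (m : ℚ)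
  reflection_stable : ∀ β ∈ R.Φ, ∀ γ ∈ R.Φ, γ - R.coroot β γ • β ∈ R.Φ
  simple_mem : ∀ i, R.α i ∈ R.Φ
  indep : LinearIndependent ℚ R.α
  pos_subset : R.pos ⊆ R.Φ
  pos_or_neg : ∀ β ∈ R.Φ, (β ∈ R.pos ∧ -β ∉ R.pos) ∨ (β ∉ R.pos ∧ -β ∈ R.pos)
  simple_pos : ∀ i, R.α i ∈ R.pos
  pos_nonneg_comb : ∀ β ∈ R.pos, ∃ c : Fin R.r → ℚ, (∀ i, 0 ≤ c i) ∧ β = ∑ i, c i • R.α i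

/-!
Besides the subword definition `BruhatLE` we use the chain form of the Bruhat order: `y` is
reached from `x` by left multiplications by reflections `s_β` that raise the length. The strong
exchange condition, proved from the root system (if `β > 0` and `w⁻¹β < 0`, then `s_β w` is
obtained by deleting one letter from any word for `w`), shows that an element chain-below `y` is
a subword of *every* word for `y`.

Conversely, the Demazure step `x ↦ s_i * x` is monotone for the chain order and lies above both
`x` and `s_i x`. Going letter by letter along a reduced word `l` for `v`, this gives
`x w ≤ v * w` for every subword `x` of `l`; for `w = 1` it shows that subwords are chain-below,
so the two orders agree. The maximum is attained by the subword of `l` formed by the letters at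
which the Demazure steps went up.
-/

variable {R : RootData}

section Reflections

lemma s_eq_reflection (hR : R.IsRootSystem) {β : R.V} (hβ : β ∈ R.Φ) :
    R.s β = Module.reflection (hR.coroot_self β hβ) := by
  have hinv : (R.reflMap β).comp (R.reflMap β) = LinearMap.id :=
    LinearMap.ext (Module.involutive_preReflection (hR.coroot_self β hβ))
  rw [s, dif_pos hinv]
  rfl

lemma s_apply (hR : R.IsRootSystem) {β : R.V} (hβ : β ∈ R.Φ) (x : R.V) :
    R.s β x = x - R.coroot β x • β := by
  rw [s_eq_reflection hR hβ, Module.reflection_apply]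

lemma s_self (hR : R.IsRootSystem) {β : R.V} (hβ : β ∈ R.Φ) : R.s β β = -β := by
  rw [s_eq_reflection hR hβ, Module.reflection_apply_self]

lemma s_inv (hR : R.IsRootSystem) {β : R.V} (hβ : β ∈ R.Φ) : (R.s β)⁻¹ = R.s β := by
  rw [s_eq_reflection hR hβ, Module.reflection_inv]

lemma s_mul_self (hR : R.IsRootSystem) {β : R.V} (hβ : β ∈ R.Φ) : R.s β * R.s β = 1 := by
  rw [← mul_inv_cancel (R.s β), s_inv hR hβ]

lemma s_mul_s_mul (hR : R.IsRootSystem) {β : R.V} (hβ : β ∈ R.Φ) (x : R.Aut) :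
    R.s β * (R.s β * x) = x := by
  rw [← mul_assoc, s_mul_self hR hβ, one_mul]

lemma s_apply_mem (hR : R.IsRootSystem) {β γ : R.V} (hβ : β ∈ R.Φ) (hγ : γ ∈ R.Φ) :
    R.s β γ ∈ R.Φ := by
  rw [s_apply hR hβ]
  exact hR.reflection_stable β hβ γ hγ

/-- The coroot is determined by the root, since `Φ` is finite and spans `V`. -/
lemma s_eq_reflection_of_mapsTo (hR : R.IsRootSystem) {β : R.V} (hβ : β ∈ R.Φ)
    {f : Module.Dual ℚ R.V} (hf : f β = 2) (hfΦ : Set.MapsTo (Module.preReflection β f) R.Φ R.Φ) :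
    R.s β = Module.reflection hf := by
  obtain rfl : R.coroot β = f :=
    Module.Dual.eq_of_preReflection_mapsTo hR.finite hR.span_top (hR.coroot_self β hβ)
      (fun γ hγ => hR.reflection_stable β hβ γ hγ) hf hfΦ
  exact s_eq_reflection hR hβ

lemma s_eq_of_eq_smul (hR : R.IsRootSystem) {β δ : R.V} (hβ : β ∈ R.Φ) (hδ : δ ∈ R.Φ)
    {c : ℚ} (hc : β = c • δ) : R.s β = R.s δ := by
  have hf : (c • R.coroot β) δ = 2 := by
    rw [LinearMap.smul_apply, ← map_smul, ← hc, hR.coroot_self β hβ]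
  have hsmul : ∀ γ, (c • R.coroot β) γ • δ = R.coroot β γ • β := fun γ => by
    rw [hc, LinearMap.smul_apply, smul_smul, smul_eq_mul, mul_comm]
  have hmaps : Set.MapsTo (Module.preReflection δ (c • R.coroot β)) R.Φ R.Φ := fun γ hγ => by
    rw [Module.preReflection_apply, hsmul]
    exact hR.reflection_stable β hβ γ hγ
  ext x
  rw [s_eq_reflection_of_mapsTo hR hδ hf hmaps, Module.reflection_apply, hsmul, s_apply hR hβ]

lemma exists_pos_s_eq (hR : R.IsRootSystem) {β : R.V} (hβ : β ∈ R.Φ) :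
    ∃ γ ∈ R.pos, R.s γ = R.s β := by
  rcases hR.pos_or_neg β hβ with ⟨hpos, -⟩ | ⟨-, hneg⟩
  · exact ⟨β, hpos, rfl⟩
  · exact ⟨-β, hneg, s_eq_of_eq_smul hR (hR.pos_subset hneg) hβ (neg_one_smul ℚ β).symm⟩

end Reflections

section WeylGroup

lemma wordProd_cons (i : Fin R.r) (l : List (Fin R.r)) :
    R.wordProd (i :: l) = R.S i * R.wordProd l := by
  simp [wordProd]

lemma wordProd_append (l₁ l₂ : List (Fin R.r)) :
    R.wordProd (l₁ ++ l₂) = R.wordProd l₁ * R.wordProd l₂ := by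
  simp [wordProd]

lemma S_mem (i : Fin R.r) : R.S i ∈ R.weylGroup :=
  Subgroup.subset_closure ⟨i, rfl⟩

lemma wordProd_mem (l : List (Fin R.r)) : R.wordProd l ∈ R.weylGroup := by
  induction l with
  | nil => exact one_mem _
  | cons i t ih => rw [wordProd_cons]; exact mul_mem (S_mem i) ih

lemma S_inv (hR : R.IsRootSystem) (i : Fin R.r) : (R.S i)⁻¹ = R.S i :=
  s_inv hR (hR.simple_mem i)

lemma S_mul_S_mul (hR : R.IsRootSystem) (i : Fin R.r) (x : R.Aut) :
    R.S i * (R.S i * x) = x :=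
  s_mul_s_mul hR (hR.simple_mem i) x

lemma wordProd_reverse (hR : R.IsRootSystem) (l : List (Fin R.r)) :
    R.wordProd l.reverse = (R.wordProd l)⁻¹ := by
  induction l with
  | nil => simp [wordProd]
  | cons i t ih =>
    rw [List.reverse_cons, wordProd_append, ih, wordProd_cons i t, mul_inv_rev, S_inv hR]
    simp [wordProd]

lemma exists_wordProd_eq (hR : R.IsRootSystem) {x : R.Aut} (hx : x ∈ R.weylGroup) :
    ∃ l, R.wordProd l = x := by
  induction hx using Subgroup.closure_induction with
  | mem y hy =>
    obtain ⟨i, rfl⟩ := hy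
    exact ⟨[i], by simp [wordProd]⟩
  | one => exact ⟨[], rfl⟩
  | mul y z _ _ ihy ihz =>
    obtain ⟨ly, rfl⟩ := ihy
    obtain ⟨lz, rfl⟩ := ihz
    exact ⟨ly ++ lz, wordProd_append ly lz⟩
  | inv y _ ihy =>
    obtain ⟨ly, rfl⟩ := ihy
    exact ⟨ly.reverse, wordProd_reverse hR ly⟩

lemma apply_mem_of_mem_weylGroup (hR : R.IsRootSystem) {u : R.Aut} (hu : u ∈ R.weylGroup)
    {γ : R.V} (hγ : γ ∈ R.Φ) : u γ ∈ R.Φ := by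
  obtain ⟨l, rfl⟩ := exists_wordProd_eq hR hu
  induction l with
  | nil => exact hγ
  | cons i t ih => rw [wordProd_cons]; exact s_apply_mem hR (hR.simple_mem i) (ih (wordProd_mem t))

lemma s_conj (hR : R.IsRootSystem) {u : R.Aut} (hu : u ∈ R.weylGroup) {β : R.V}
    (hβ : β ∈ R.Φ) : R.s (u β) = u * R.s β * u⁻¹ := by
  let f : Module.Dual ℚ R.V := (R.coroot β).comp (u⁻¹ : R.Aut).toLinearMap
  have hf : f (u β) = 2 := by
    simp [f, hR.coroot_self β hβ]
  have hconj : ∀ x, (u * R.s β * u⁻¹) x = x - f x • u β := fun x => by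
    simp [f, s_apply hR hβ]
  have hmaps : Set.MapsTo (Module.preReflection (u β) f) R.Φ R.Φ := fun γ hγ => by
    rw [Module.preReflection_apply, ← hconj]
    exact apply_mem_of_mem_weylGroup hR hu (s_apply_mem hR hβ
      (apply_mem_of_mem_weylGroup hR (inv_mem hu) hγ))
  ext x
  rw [s_eq_reflection_of_mapsTo hR (apply_mem_of_mem_weylGroup hR hu hβ) hf hmaps,
    Module.reflection_apply, hconj]

end WeylGroup

section Length

lemma len_le_length {x : R.Aut} {l : List (Fin R.r)} (h : R.wordProd l = x) :
    R.len x ≤ l.length :=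
  Nat.sInf_le ⟨l, rfl, h⟩

lemma exists_reduced (hR : R.IsRootSystem) {x : R.Aut} (hx : x ∈ R.weylGroup) :
    ∃ l, R.Reduced l ∧ R.wordProd l = x := by
  obtain ⟨l, hl⟩ := exists_wordProd_eq hR hx
  obtain ⟨m, hm, hmx⟩ : R.len x ∈ {n | ∃ l : List (Fin R.r), l.length = n ∧ R.wordProd l = x} :=
    Nat.sInf_mem ⟨_, l, rfl, hl⟩
  exact ⟨m, by rw [Reduced, hmx, hm], hmx⟩

lemma len_S_mul_le (hR : R.IsRootSystem) {x : R.Aut} (hx : x ∈ R.weylGroup) (i : Fin R.r) :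
    R.len (R.S i * x) ≤ R.len x + 1 := by
  obtain ⟨l, hl, rfl⟩ := exists_reduced hR hx
  rw [hl]
  exact len_le_length (wordProd_cons i l)

end Length

section Exchange

lemma neg_mem_pos_of_not_mem_pos (hR : R.IsRootSystem) {β : R.V} (hβ : β ∈ R.Φ)
    (h : β ∉ R.pos) : -β ∈ R.pos := by
  rcases hR.pos_or_neg β hβ with h' | h'
  · exact absurd h'.1 h
  · exact h'.2

lemma exists_eq_smul_of_S_apply_not_mem_pos (hR : R.IsRootSystem) {β : R.V} (hβ : β ∈ R.pos)
    {i : Fin R.r} (h : R.S i β ∉ R.pos) : ∃ c : ℚ, β = c • R.α i := by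
  have hneg := neg_mem_pos_of_not_mem_pos hR (s_apply_mem hR (hR.simple_mem i)
    (hR.pos_subset hβ)) h
  obtain ⟨c, hc, rfl⟩ := hR.pos_nonneg_comb _ hβ
  obtain ⟨d, hd, hsum⟩ := hR.pos_nonneg_comb _ hneg
  set k := R.coroot (R.α i) (∑ j, c j • R.α j)
  have hd' : -R.S i (∑ j, c j • R.α j) = ∑ j, d j • R.α j := hsum
  have hS : R.S i (∑ j, c j • R.α j) = ∑ j, c j • R.α j - k • R.α i :=
    s_apply hR (hR.simple_mem i) _
  have hcd : ∑ j, (c + d) j • R.α j = ∑ j, (Pi.single i k : Fin R.r → ℚ) j • R.α j := by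
    simp only [Pi.add_apply, add_smul, Finset.sum_add_distrib, ← hd', hS, Pi.single_apply,
      ite_smul, zero_smul, Finset.sum_ite_eq', Finset.mem_univ, if_true]
    abel
  refine ⟨c i, ?_⟩
  rw [Finset.sum_eq_single i]
  · intro j _ hj
    have hj' := Fintype.linearIndependent_iffₛ.mp hR.indep _ _ hcd j
    simp only [Pi.add_apply, Pi.single_apply, hj, if_false] at hj'
    rw [show c j = 0 by linarith [hc j, hd j], zero_smul]
  · simp

theorem strong_exchange (hR : R.IsRootSystem) (l : List (Fin R.r)) {β : R.V}
    (hβ : β ∈ R.pos) (hneg : -((R.wordProd l)⁻¹ β) ∈ R.pos) :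
    ∃ j < l.length, R.s β * R.wordProd l = R.wordProd (l.eraseIdx j) := by
  induction l generalizing β with
  | nil =>
    rcases hR.pos_or_neg β (hR.pos_subset hβ) with h | h
    · exact absurd hneg (by simpa [wordProd] using h.2)
    · exact absurd hβ h.1
  | cons i t ih =>
    have hβΦ := hR.pos_subset hβ
    by_cases hp : R.S i β ∈ R.pos
    · have hneg' : -((R.wordProd t)⁻¹ (R.S i β)) ∈ R.pos := by
        rwa [wordProd_cons, mul_inv_rev, S_inv hR] at hneg
      obtain ⟨j, hj, heq⟩ := ih hp hneg'
      refine ⟨j + 1, by simpa using hj, ?_⟩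
      have hconj : R.s (R.S i β) = R.S i * R.s β * (R.S i)⁻¹ := s_conj hR (S_mem i) hβΦ
      rw [List.eraseIdx_cons_succ, wordProd_cons, wordProd_cons, ← heq, hconj, S_inv hR]
      simp only [mul_assoc, S_mul_S_mul hR]
    · obtain ⟨c, hc⟩ := exists_eq_smul_of_S_apply_not_mem_pos hR hβ hp
      refine ⟨0, by simp, ?_⟩
      rw [List.eraseIdx_cons_zero, wordProd_cons, s_eq_of_eq_smul hR hβΦ (hR.simple_mem i) hc]
      exact S_mul_S_mul hR i _

lemma len_s_mul_lt (hR : R.IsRootSystem) {b : R.Aut} (hb : b ∈ R.weylGroup) {β : R.V}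
    (hβ : β ∈ R.pos) (hneg : -(b⁻¹ β) ∈ R.pos) : R.len (R.s β * b) < R.len b := by
  obtain ⟨l, hl, rfl⟩ := exists_reduced hR hb
  obtain ⟨j, hj, heq⟩ := strong_exchange hR l hβ hneg
  have hlen : R.len (R.wordProd l) = l.length := hl
  have := len_le_length heq.symm
  rw [List.length_eraseIdx_of_lt hj] at this
  omega

lemma len_lt_s_mul (hR : R.IsRootSystem) {b : R.Aut} {β : R.V} (hb : R.s β * b ∈ R.weylGroup)
    (hβ : β ∈ R.pos) (hpos : b⁻¹ β ∈ R.pos) : R.len b < R.len (R.s β * b) := by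
  have hβΦ := hR.pos_subset hβ
  have h := len_s_mul_lt hR hb hβ (by
    rwa [mul_inv_rev, LinearEquiv.mul_apply, s_inv hR hβΦ, s_self hR hβΦ, map_neg, neg_neg])
  rwa [s_mul_s_mul hR hβΦ] at h

lemma len_S_mul_eq_or (hR : R.IsRootSystem) {x : R.Aut} (hx : x ∈ R.weylGroup) (i : Fin R.r) :
    R.len (R.S i * x) = R.len x + 1 ∨ R.len x = R.len (R.S i * x) + 1 := by
  have hup := len_S_mul_le hR hx i
  have hdown := len_S_mul_le hR (mul_mem (S_mem i) hx) i
  rw [S_mul_S_mul hR] at hdown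
  by_cases hp : x⁻¹ (R.α i) ∈ R.pos
  · have hlt : R.len x < R.len (R.S i * x) :=
      len_lt_s_mul hR (mul_mem (S_mem i) hx) (hR.simple_pos i) hp
    omega
  · have hlt : R.len (R.S i * x) < R.len x :=
      len_s_mul_lt hR hx (hR.simple_pos i) (neg_mem_pos_of_not_mem_pos hR
        (apply_mem_of_mem_weylGroup hR (inv_mem hx) (hR.simple_mem i)) hp)
    omega

end Exchange

def BruhatStep (R : RootData) (x y : R.Aut) : Prop :=
  x ∈ R.weylGroup ∧ y ∈ R.weylGroup ∧ ∃ β ∈ R.Φ, y = R.s β * x ∧ R.len x < R.len y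

def ChainLE (R : RootData) : R.Aut → R.Aut → Prop := Relation.ReflTransGen R.BruhatStep

section BruhatOrder

lemma BruhatStep.exists_eraseIdx (hR : R.IsRootSystem) {c b : R.Aut} (h : R.BruhatStep c b)
    {l : List (Fin R.r)} (hl : R.wordProd l = b) :
    ∃ j < l.length, R.wordProd (l.eraseIdx j) = c := by
  obtain ⟨hc, -, β, hβ, rfl, hlt⟩ := h
  obtain ⟨γ, hγ, hγβ⟩ := exists_pos_s_eq hR hβ
  have hγΦ := hR.pos_subset hγ
  have hbc : R.s γ * R.wordProd l = c := by rw [hl, hγβ, s_mul_s_mul hR hβ]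
  have hneg : -((R.wordProd l)⁻¹ γ) ∈ R.pos := by
    refine neg_mem_pos_of_not_mem_pos hR
      (apply_mem_of_mem_weylGroup hR (inv_mem (wordProd_mem l)) hγΦ) fun hpos => ?_
    have := len_lt_s_mul hR (hbc ▸ hc) hγ hpos
    rw [hbc, hl] at this
    omega
  obtain ⟨j, hj, heq⟩ := strong_exchange hR l hγ hneg
  exact ⟨j, hj, heq ▸ hbc⟩

lemma exists_sublist_of_chainLE (hR : R.IsRootSystem) {x b : R.Aut} (h : R.ChainLE x b)
    {l : List (Fin R.r)} (hl : R.wordProd l = b) :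
    ∃ m, m.Sublist l ∧ R.wordProd m = x := by
  induction h generalizing l with
  | refl => exact ⟨l, .refl l, hl⟩
  | tail _ hstep ih =>
    obtain ⟨j, -, hj⟩ := hstep.exists_eraseIdx hR hl
    obtain ⟨m, hm, hmx⟩ := ih hj
    exact ⟨m, hm.trans (List.eraseIdx_sublist l j), hmx⟩

lemma bruhatStep_S_mul (hR : R.IsRootSystem) {x : R.Aut} (hx : x ∈ R.weylGroup) {i : Fin R.r}
    (h : R.len x < R.len (R.S i * x)) : R.BruhatStep x (R.S i * x) :=
  ⟨hx, mul_mem (S_mem i) hx, R.α i, hR.simple_mem i, rfl, h⟩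

lemma bruhatStep_of_S_mul (hR : R.IsRootSystem) {x : R.Aut} (hx : x ∈ R.weylGroup)
    {i : Fin R.r} (h : R.len (R.S i * x) < R.len x) : R.BruhatStep (R.S i * x) x := by
  have := bruhatStep_S_mul hR (mul_mem (S_mem i) hx) (i := i) (by rwa [S_mul_S_mul hR])
  rwa [S_mul_S_mul hR] at this

lemma BruhatStep.S_mul (hR : R.IsRootSystem) {c b : R.Aut} (h : R.BruhatStep c b) (i : Fin R.r)
    (hlt : R.len (R.S i * c) < R.len (R.S i * b)) : R.BruhatStep (R.S i * c) (R.S i * b) := by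
  obtain ⟨hc, hb, β, hβ, rfl, -⟩ := h
  refine ⟨mul_mem (S_mem i) hc, mul_mem (S_mem i) hb, R.S i β,
    s_apply_mem hR (hR.simple_mem i) hβ, ?_, hlt⟩
  rw [s_conj hR (S_mem i) hβ]
  group

lemma dmulStep_of_lt {x : R.Aut} {i : Fin R.r} (h : R.len x < R.len (R.S i * x)) :
    R.dmulStep i x = R.S i * x :=
  if_pos h

lemma dmulStep_of_not_lt {x : R.Aut} {i : Fin R.r} (h : ¬R.len x < R.len (R.S i * x)) :
    R.dmulStep i x = x :=
  if_neg h

lemma dmulList_cons (i : Fin R.r) (l : List (Fin R.r)) (w : R.Aut) :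
    R.dmulList (i :: l) w = R.dmulStep i (R.dmulList l w) :=
  rfl

lemma dmulStep_mem {x : R.Aut} (hx : x ∈ R.weylGroup) (i : Fin R.r) :
    R.dmulStep i x ∈ R.weylGroup := by
  unfold dmulStep
  split_ifs
  exacts [mul_mem (S_mem i) hx, hx]

lemma dmulList_mem {w : R.Aut} (hw : w ∈ R.weylGroup) (l : List (Fin R.r)) :
    R.dmulList l w ∈ R.weylGroup := by
  induction l with
  | nil => exact hw
  | cons i t ih => exact dmulStep_mem ih i

lemma chainLE_dmulStep (hR : R.IsRootSystem) {x : R.Aut} (hx : x ∈ R.weylGroup) (i : Fin R.r) :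
    R.ChainLE x (R.dmulStep i x) := by
  by_cases h : R.len x < R.len (R.S i * x)
  · rw [dmulStep_of_lt h]
    exact .single (bruhatStep_S_mul hR hx h)
  · rw [dmulStep_of_not_lt h]
    exact .refl

lemma chainLE_S_mul_dmulStep (hR : R.IsRootSystem) {x : R.Aut} (hx : x ∈ R.weylGroup)
    (i : Fin R.r) : R.ChainLE (R.S i * x) (R.dmulStep i x) := by
  by_cases h : R.len x < R.len (R.S i * x)
  · rw [dmulStep_of_lt h]
    exact .refl
  · rw [dmulStep_of_not_lt h]
    exact .single (bruhatStep_of_S_mul hR hx (by have := len_S_mul_eq_or hR hx i; omega))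

/-- The only case needing an idea: `c → b` with `s_i c > c` and `s_i b < b`. Deleting a letter
from a reduced word `i :: r` of `b` gives `c`; either it is the letter `i`, and `s_i c = b`,
or `s_i c` is a proper subword of `r`, hence shorter than `s_i b`. -/
lemma dmulStep_mono_of_bruhatStep (hR : R.IsRootSystem) {c b : R.Aut} (h : R.BruhatStep c b)
    (i : Fin R.r) : R.ChainLE (R.dmulStep i c) (R.dmulStep i b) := by
  obtain ⟨hc, hb, -, -, -, hlt⟩ := id h
  rcases len_S_mul_eq_or hR hc i with hc' | hc' <;>
    rcases len_S_mul_eq_or hR hb i with hb' | hb'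
  · rw [dmulStep_of_lt (by omega), dmulStep_of_lt (by omega)]
    exact .single (h.S_mul hR i (by omega))
  · rw [dmulStep_of_lt (by omega), dmulStep_of_not_lt (by omega)]
    obtain ⟨r, hr, hrb⟩ := exists_reduced hR (mul_mem (S_mem i) hb)
    have hir : R.wordProd (i :: r) = b := by rw [wordProd_cons, hrb, S_mul_S_mul hR]
    obtain ⟨j, hj, hjc⟩ := h.exists_eraseIdx hR hir
    cases j with
    | zero =>
      rw [List.eraseIdx_cons_zero, hrb] at hjc
      rw [← hjc, S_mul_S_mul hR]
      exact .refl
    | succ j =>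
      rw [List.eraseIdx_cons_succ, wordProd_cons] at hjc
      have hshort : R.len (R.S i * c) < R.len (R.S i * b) := by
        have hr' : R.len (R.S i * b) = r.length := hrb ▸ hr
        have := len_le_length (x := R.S i * c) (by rw [← hjc, S_mul_S_mul hR])
        rw [List.length_eraseIdx_of_lt (by simpa using hj)] at this
        simp only [List.length_cons] at hj
        omega
      exact .tail (.single (h.S_mul hR i hshort)) (bruhatStep_of_S_mul hR hb (by omega))
  · rw [dmulStep_of_not_lt (by omega), dmulStep_of_lt (by omega)]
    exact .tail (.single h) (bruhatStep_S_mul hR hb (by omega))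
  · rw [dmulStep_of_not_lt (by omega), dmulStep_of_not_lt (by omega)]
    exact .single h

lemma dmulStep_mono (hR : R.IsRootSystem) {a b : R.Aut} (h : R.ChainLE a b) (i : Fin R.r) :
    R.ChainLE (R.dmulStep i a) (R.dmulStep i b) :=
  Relation.ReflTransGen.lift' (R.dmulStep i)
    (fun _ _ hstep => dmulStep_mono_of_bruhatStep hR hstep i) _ _ h

lemma chainLE_dmulList_of_sublist (hR : R.IsRootSystem) {w : R.Aut} (hw : w ∈ R.weylGroup)
    {l m : List (Fin R.r)} (hm : m.Sublist l) :
    R.ChainLE (R.wordProd m * w) (R.dmulList l w) := by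
  induction hm with
  | slnil => exact (one_mul w).symm ▸ .refl
  | cons i _ ih => exact ih.trans (chainLE_dmulStep hR (dmulList_mem hw _) i)
  | cons_cons i _ ih =>
    rw [wordProd_cons, mul_assoc]
    exact (chainLE_S_mul_dmulStep hR (mul_mem (wordProd_mem _) hw) i).trans (dmulStep_mono hR ih i)

lemma dmulList_one_of_reduced (hR : R.IsRootSystem) {l : List (Fin R.r)} (hl : R.Reduced l) :
    R.dmulList l 1 = R.wordProd l := by
  induction l with
  | nil => rfl
  | cons i t ih =>
    have hl' : R.len (R.S i * R.wordProd t) = t.length + 1 := by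
      simpa [Reduced, wordProd_cons] using hl
    have h1 := len_le_length (R := R) (l := t) rfl
    have h2 := len_S_mul_le hR (wordProd_mem t) i
    rw [dmulList_cons, ih (by unfold Reduced; omega), wordProd_cons,
      dmulStep_of_lt (by omega)]

lemma chainLE_of_bruhatLE (hR : R.IsRootSystem) {x y : R.Aut} (h : R.BruhatLE x y) :
    R.ChainLE x y := by
  obtain ⟨l, hl, rfl, m, hm, rfl⟩ := h
  simpa [mul_one, dmulList_one_of_reduced hR hl] using
    chainLE_dmulList_of_sublist hR (one_mem _) hm

lemma bruhatLE_of_chainLE (hR : R.IsRootSystem) {x y : R.Aut} (h : R.ChainLE x y)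
    (hy : y ∈ R.weylGroup) : R.BruhatLE x y := by
  obtain ⟨l, hl, rfl⟩ := exists_reduced hR hy
  obtain ⟨m, hm, hmx⟩ := exists_sublist_of_chainLE hR h rfl
  exact ⟨l, hl, rfl, m, hm, hmx⟩

end BruhatOrder

section Demazure

lemma exists_sublist_wordProd_mul_eq_dmulList (l : List (Fin R.r)) (w : R.Aut) :
    ∃ m, m.Sublist l ∧ R.wordProd m * w = R.dmulList l w := by
  induction l with
  | nil => exact ⟨[], .refl _, one_mul w⟩
  | cons i t ih =>
    obtain ⟨m, hm, hmw⟩ := ih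
    by_cases h : R.len (R.dmulList t w) < R.len (R.S i * R.dmulList t w)
    · refine ⟨i :: m, hm.cons_cons i, ?_⟩
      rw [wordProd_cons, mul_assoc, hmw, dmulList_cons,
        dmulStep_of_lt h]
    · refine ⟨m, hm.cons i, ?_⟩
      rw [hmw, dmulList_cons, dmulStep_of_not_lt h]

lemma exists_reduced_dmul_eq_dmulList (hR : R.IsRootSystem) {v : R.Aut}
    (hv : v ∈ R.weylGroup) (w : R.Aut) :
    ∃ l, R.Reduced l ∧ R.wordProd l = v ∧ R.dmul v w = R.dmulList l w := by
  have hex := exists_reduced hR hv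
  exact ⟨hex.choose, hex.choose_spec.1, hex.choose_spec.2, dif_pos hex⟩

end Demazure

end RootData

theorem statement6 (R : RootData) (hR : R.IsRootSystem)
    (v w : R.Aut) (hv : v ∈ R.weylGroup) (hw : w ∈ R.weylGroup) :
    (∃ x : R.Aut, R.BruhatLE x v ∧ x * w = R.dmul v w) ∧
      ∀ x : R.Aut, R.BruhatLE x v → R.BruhatLE (x * w) (R.dmul v w) := by
  obtain ⟨l, hl, hlv, hdmul⟩ := R.exists_reduced_dmul_eq_dmulList hR hv w
  refine ⟨?_, fun x hx => ?_⟩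
  · obtain ⟨m, hm, hmw⟩ := R.exists_sublist_wordProd_mul_eq_dmulList l w
    exact ⟨R.wordProd m, ⟨l, hl, hlv, m, hm, rfl⟩, hmw.trans hdmul.symm⟩
  · obtain ⟨m, hm, rfl⟩ := R.exists_sublist_of_chainLE hR (R.chainLE_of_bruhatLE hR hx) hlv
    rw [hdmul]
    exact R.bruhatLE_of_chainLE hR (R.chainLE_dmulList_of_sublist hR hw hm) (R.dmulList_mem hw l)
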